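/- Fix positive integers q and n with 1 ≤ n ≤ q and real numbers λ > 0, μ > 0, κ ∈ ℝ, and consider the system dx/dt = y, dy/dt = −x + t^{−n/q}·y·(λ + κ·x − μ·(x² + y²)/2) for t ≥ 1. Then the circle {(x,y) : (x² + y²)/2 = λ/μ} is a stable limit cycle: for every ε > 0 there exist δ* > 0 and t* ≥ 1 such that for every τ0 ≥ t* and every solution (x,y) with |(x(τ0)² + y(τ0)²)/2 − λ/μ| ≤ δ*, one has |(x(t)² + y(t)²)/2 − λ/μ| < ε for all t ≥ τ0, and moreover (x(t)² + y(t)²)/2 → λ/μ as t → ∞. -/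

import Mathlib

/-!
Write `E = (x² + y²)/2`, `r = λ/μ` and `a(t) = t^(-n/q)`. Along solutions
`E' = a y² (λ + κx - μE)`, whose average over the fast rotation is `a E (λ - μE)`. The oscillating
part is removed to first order by a near-identity change `F = E - r + a Q(x, y)`, after which
`F' = -μ a E F + O(a² + |a'|)` near the circle, and `|a'| ≤ a²` because `n ≤ q`. Hence `u = F²`
satisfies `u' ≤ a (-λ u + C a)`: for late starting times a small sublevel set of `u` is forward
invariant, and since `a ≥ 1/t` is not integrable, `u → 0`, i.e. `E → r`.
-/

open Filter Set Topology

/-- A solution on `[τ0,∞)` of the system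
`dx/dt = y`, `dy/dt = −x + t^{−n/q}·y·(λ + κ·x − μ·(x² + y²)/2)`. -/
def IsCycleSol (q n : ℕ) (lam μ κ τ0 : ℝ) (x y : ℝ → ℝ) : Prop :=
  ∀ t ≥ τ0, HasDerivAt x (y t) t ∧
    HasDerivAt y (-x t + t ^ (-(n:ℝ)/(q:ℝ)) * y t *
      (lam + κ * x t - μ * ((x t) ^ 2 + (y t) ^ 2) / 2)) t

theorem eventually_nhdsGT_lt_of_hasDerivAt_neg {f : ℝ → ℝ} {f' x : ℝ} (hf : HasDerivAt f f' x)
    (hneg : f' < 0) : ∀ᶠ z in 𝓝[>] x, f z < f x := by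
  filter_upwards [hf.hasDerivWithinAt.limsup_slope_le' (lt_irrefl x) hneg, self_mem_nhdsWithin]
    with z hslope (hz : x < z)
  rw [slope_def_field, div_neg_iff] at hslope
  rcases hslope with ⟨-, hzx⟩ | ⟨hfz, -⟩ <;> linarith

theorem forall_le_of_hasDerivAt_neg_of_lt {f f' g : ℝ → ℝ} {a c d : ℝ}
    (hf : ∀ t ≥ a, HasDerivAt f (f' t) t) (hg : ∀ t ≥ a, ContinuousAt g t)
    (hfa : f a ≤ c) (hga : g a ≤ d)
    (hgap : ∀ t ≥ a, f t ≤ c → g t ≤ d → g t < d)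
    (hneg : ∀ t ≥ a, f t = c → g t ≤ d → f' t < 0) :
    ∀ t ≥ a, f t ≤ c ∧ g t ≤ d := by
  intro b hb
  set s := {t | f t ≤ c ∧ g t ≤ d}
  have hcont : ContinuousOn (fun t => (f t, g t)) (Icc a b) := fun t ht =>
    ((hf t ht.1).continuousAt.prodMk (hg t ht.1)).continuousWithinAt
  have hclosed : IsClosed (s ∩ Icc a b) := by
    rw [inter_comm]
    exact hcont.preimage_isClosed_of_isClosed isClosed_Icc (isClosed_Iic.prod isClosed_Iic)
  refine hclosed.Icc_subset_of_forall_mem_nhdsWithin ⟨hfa, hga⟩ ?_ ⟨hb, le_rfl⟩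
  rintro t ⟨⟨hft, hgt⟩, hta, -⟩
  have hg_lt : ∀ᶠ z in 𝓝[>] t, g z < d :=
    nhdsWithin_le_nhds ((hg t hta).eventually (gt_mem_nhds (hgap t hta hft hgt)))
  have hf_le : ∀ᶠ z in 𝓝[>] t, f z ≤ c := by
    rcases hft.lt_or_eq with hlt | heq
    · exact nhdsWithin_le_nhds ((hf t hta).continuousAt.eventually (ge_mem_nhds hlt))
    · filter_upwards [eventually_nhdsGT_lt_of_hasDerivAt_neg (hf t hta) (hneg t hta heq hgt)]
        with z hz using heq ▸ hz.le
  filter_upwards [hf_le, hg_lt] with z hfz hgz using ⟨hfz, hgz.le⟩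

theorem exists_lt_of_hasDerivAt_le_neg_div {f f' : ℝ → ℝ} {T k c m : ℝ} (hT : 0 < T) (hk : 0 < k)
    (hf : ∀ t ≥ T, HasDerivAt f (f' t) t) (hbdd : ∀ t ≥ T, m ≤ f t)
    (hdec : ∀ t ≥ T, c ≤ f t → f' t ≤ -(k / t)) :
    ∃ t ≥ T, f t < c := by
  by_contra! hge
  have hlog : ∀ t ≥ T, HasDerivAt (fun s => f s + k * Real.log s) (f' t + k * t⁻¹) t :=
    fun t ht => (hf t ht).add ((Real.hasDerivAt_log (hT.trans_le ht).ne').const_mul k)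
  have hanti : AntitoneOn (fun s => f s + k * Real.log s) (Ici T) := by
    refine antitoneOn_of_hasDerivWithinAt_nonpos (convex_Ici T)
      (fun t ht => (hlog t ht).continuousAt.continuousWithinAt)
      (fun t ht => (hlog t (interior_subset ht)).hasDerivWithinAt) fun t ht => ?_
    have ht' : T ≤ t := interior_subset ht
    have := hdec t ht' (hge t ht')
    rw [div_eq_mul_inv] at this
    linarith
  obtain ⟨t, hlarge, ht⟩ := ((Real.tendsto_log_atTop.const_mul_atTop hk).eventually_gt_atTop
    (f T + k * Real.log T - m)).and (eventually_ge_atTop T) |>.exists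
  have hmono : f t + k * Real.log t ≤ f T + k * Real.log T := hanti self_mem_Ici ht ht
  linarith [hbdd t ht]

theorem eventually_le_of_hasDerivAt_le_neg_div {f f' : ℝ → ℝ} {T k c m : ℝ} (hT : 0 < T)
    (hk : 0 < k) (hf : ∀ t ≥ T, HasDerivAt f (f' t) t) (hbdd : ∀ t ≥ T, m ≤ f t)
    (hdec : ∀ t ≥ T, c ≤ f t → f' t ≤ -(k / t)) :
    ∀ᶠ t in atTop, f t ≤ c := by
  obtain ⟨t₁, ht₁, hlt⟩ := exists_lt_of_hasDerivAt_le_neg_div hT hk hf hbdd hdec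
  refine eventually_atTop.2 ⟨t₁, fun t ht => ?_⟩
  refine image_le_of_deriv_right_lt_deriv_boundary (f' := f') (B' := fun _ => 0)
    (fun s hs => (hf s (ht₁.trans hs.1)).continuousAt.continuousWithinAt)
    (fun s hs => (hf s (ht₁.trans hs.1)).hasDerivWithinAt) hlt.le
    (fun _ => hasDerivAt_const _ c) (fun s hs hfs => ?_) ⟨ht, le_rfl⟩
  have hs' : T ≤ s := ht₁.trans hs.1
  have := hdec s hs' hfs.ge
  have : 0 < k / s := div_pos hk (hT.trans_le hs')
  linarith

theorem tendsto_zero_of_hasDerivAt_le {u u' a : ℝ → ℝ} {T k C : ℝ} (hT : 0 < T) (hk : 0 < k)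
    (hu : ∀ t ≥ T, HasDerivAt u (u' t) t) (hu₀ : ∀ t ≥ T, 0 ≤ u t)
    (hle : ∀ t ≥ T, u' t ≤ a t * (-(k * u t) + C * a t))
    (ha : Tendsto a atTop (𝓝 0)) (ha_inv : ∀ t ≥ T, t⁻¹ ≤ a t) :
    Tendsto u atTop (𝓝 0) := by
  have key : ∀ c > 0, ∀ᶠ t in atTop, u t ≤ c := by
    intro c hc
    have hkc : 0 < k * c / 2 := by positivity
    have hsmall : ∀ᶠ t in atTop, C * a t < k * c / 2 := by
      have := ha.const_mul C
      rw [mul_zero] at this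
      exact this.eventually_lt_const hkc
    obtain ⟨T', hT'⟩ := eventually_atTop.1 (hsmall.and (eventually_ge_atTop T))
    have hT'T : T ≤ T' := (hT' T' le_rfl).2
    refine eventually_le_of_hasDerivAt_le_neg_div (hT.trans_le hT'T) hkc
      (fun t ht => hu t (hT'T.trans ht)) (fun t ht => hu₀ t (hT'T.trans ht)) fun t ht hct => ?_
    obtain ⟨hCa, hTt⟩ := hT' t ht
    have hinv : t⁻¹ ≤ a t := ha_inv t hTt
    calc u' t ≤ a t * (-(k * u t) + C * a t) := hle t hTt
      _ ≤ a t * -(k * c / 2) := by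
          gcongr
          · exact (inv_pos.2 (hT.trans_le hTt)).le.trans hinv
          · nlinarith
      _ ≤ t⁻¹ * -(k * c / 2) := by nlinarith
      _ = -(k * c / 2 / t) := by ring
  refine tendsto_order.2 ⟨fun c hc => eventually_atTop.2 ⟨T, fun t ht => hc.trans_le (hu₀ t ht)⟩,
    fun c hc => (key (c / 2) (by positivity)).mono fun t ht => by linarith⟩

theorem abs_sub_lt_and_tendsto_of_hasDerivAt_sq_le {E F F' a : ℝ → ℝ} {τ0 r ρ C B lam : ℝ}
    (hτ0 : 0 < τ0) (hlam : 0 < lam) (hρ : 0 < ρ) (hE : ∀ t ≥ τ0, ContinuousAt E t)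
    (hF : ∀ t ≥ τ0, HasDerivAt (fun s => F s ^ 2) (F' t) t)
    (hest : ∀ t ≥ τ0, |E t - r| ≤ ρ →
      |E t - r - F t| ≤ C * a t ∧ F' t ≤ a t * (-(lam * F t ^ 2) + B * a t))
    (ha_inv : ∀ t ≥ τ0, t⁻¹ ≤ a t) (ha_lim : Tendsto a atTop (𝓝 0))
    (hsmall : ∀ t ≥ τ0, C * a t < ρ / 8 ∧ B * a t < lam * (ρ / 4) ^ 2)
    (hinit : |E τ0 - r| ≤ ρ / 8) :
    (∀ t ≥ τ0, |E t - r| < ρ) ∧ Tendsto E atTop (𝓝 r) := by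
  have hg : ∀ t ≥ τ0, ContinuousAt (fun s => |E s - r|) t := fun t ht =>
    ((hE t ht).sub continuousAt_const).abs
  have hgap : ∀ t ≥ τ0, F t ^ 2 ≤ (ρ / 4) ^ 2 → |E t - r| ≤ ρ → |E t - r| < ρ :=
    fun t ht hu hreg => by
      rw [sq_le_sq, abs_of_pos (by positivity : 0 < ρ / 4)] at hu
      linarith [abs_sub_abs_le_abs_sub (E t - r) (F t), (hest t ht hreg).1, (hsmall t ht).1]
  have hneg : ∀ t ≥ τ0, F t ^ 2 = (ρ / 4) ^ 2 → |E t - r| ≤ ρ → F' t < 0 := fun t ht hu hreg => by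
    have ha : 0 < a t := (inv_pos.2 (hτ0.trans_le ht)).trans_le (ha_inv t ht)
    refine (hest t ht hreg).2.trans_lt (mul_neg_of_pos_of_neg ha ?_)
    rw [hu]
    linarith [(hsmall t ht).2]
  have hF₀ : F τ0 ^ 2 ≤ (ρ / 4) ^ 2 := by
    have := abs_sub_abs_le_abs_sub (F τ0) (E τ0 - r)
    rw [abs_sub_comm (F τ0)] at this
    rw [sq_le_sq, abs_of_pos (by positivity : 0 < ρ / 4)]
    linarith [(hest τ0 le_rfl (hinit.trans (by linarith))).1, (hsmall τ0 le_rfl).1]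
  have htrap := forall_le_of_hasDerivAt_neg_of_lt hF hg hF₀ (hinit.trans (by linarith)) hgap hneg
  refine ⟨fun t ht => hgap t ht (htrap t ht).1 (htrap t ht).2, ?_⟩
  have hu := tendsto_zero_of_hasDerivAt_le hτ0 hlam hF (fun t _ => sq_nonneg _)
    (fun t ht => (hest t ht (htrap t ht).2).2) ha_lim ha_inv
  have hbound : Tendsto (fun t => √(F t ^ 2) + C * a t) atTop (𝓝 0) := by
    simpa using hu.sqrt.add (ha_lim.const_mul C)
  rw [tendsto_iff_norm_sub_tendsto_zero]
  refine squeeze_zero' (Eventually.of_forall fun _ => norm_nonneg _)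
    (eventually_atTop.2 ⟨τ0, fun t ht => ?_⟩) hbound
  rw [Real.norm_eq_abs, Real.sqrt_sq_eq_abs]
  linarith [abs_sub_abs_le_abs_sub (E t - r) (F t), (hest t ht (htrap t ht).2).1]

noncomputable def energy (x y : ℝ) : ℝ := (x ^ 2 + y ^ 2) / 2

section Averaging

variable (lam μ κ : ℝ)

/-- Up to `O(a)`, `y² = E + (xy)'/2` and `x y² = -(y³)'/3` along solutions; this corrector absorbs
the oscillating part `-μ a (E - r)(xy)'/2 - κ a (y³)'/3` of `E'`. -/
noncomputable def oscCorrection (x y : ℝ) : ℝ :=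
  μ * (energy x y - lam / μ) * x * y / 2 + κ * y ^ 3 / 3

noncomputable def correctedEnergy (a x y : ℝ) : ℝ :=
  energy x y - lam / μ + a * oscCorrection lam μ κ x y

noncomputable def driftRemainder (x y : ℝ) : ℝ :=
  μ * energy x y * oscCorrection lam μ κ x y + (lam + κ * x - μ * energy x y) *
    (μ * (energy x y - lam / μ) * x * y / 2 + κ * y ^ 3 + μ * x * y ^ 3 / 2)

variable {lam μ κ}

theorem hasDerivAt_correctedEnergy {x y a : ℝ → ℝ} {a' t : ℝ} (hμ : μ ≠ 0)
    (hx : HasDerivAt x (y t) t)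
    (hy : HasDerivAt y (-x t + a t * y t * (lam + κ * x t - μ * ((x t) ^ 2 + (y t) ^ 2) / 2)) t)
    (ha : HasDerivAt a a' t) :
    HasDerivAt (fun s => correctedEnergy lam μ κ (a s) (x s) (y s))
      (-(μ * a t * energy (x t) (y t) * correctedEnergy lam μ κ (a t) (x t) (y t))
        + a t ^ 2 * driftRemainder lam μ κ (x t) (y t)
        + a' * oscCorrection lam μ κ (x t) (y t)) t := by
  have hE := ((hx.pow 2).add (hy.pow 2)).div_const 2
  have hQ := (((((hE.sub_const (lam / μ)).const_mul μ).mul hx).mul hy).div_const 2).add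
    (((hy.pow 3).const_mul κ).div_const 3)
  have hF := (hE.sub_const (lam / μ)).add (ha.mul hQ)
  refine hF.congr_deriv ?_
  simp only [correctedEnergy, driftRemainder, oscCorrection, energy, Pi.add_apply, Pi.mul_apply,
    Pi.pow_apply]
  field_simp
  ring

end Averaging

theorem exists_abs_le_of_energy_le {f : ℝ → ℝ → ℝ} (hf : Continuous (Function.uncurry f))
    (R : ℝ) : ∃ C, ∀ x y, energy x y ≤ R → |f x y| ≤ C := by
  obtain ⟨C, hC⟩ := (isCompact_closedBall (0 : ℝ × ℝ) √(2 * R)).exists_bound_of_continuousOn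
    hf.continuousOn
  refine ⟨C, fun x y hxy => hC (x, y) ?_⟩
  have hx : |x| ≤ √(2 * R) := Real.abs_le_sqrt (by unfold energy at hxy; nlinarith [sq_nonneg y])
  have hy : |y| ≤ √(2 * R) := Real.abs_le_sqrt (by unfold energy at hxy; nlinarith [sq_nonneg x])
  simpa [Prod.norm_def] using And.intro hx hy

theorem exists_abs_remainders_le (lam μ κ R : ℝ) : ∃ C, ∀ x y, energy x y ≤ R →
    |driftRemainder lam μ κ x y| ≤ C ∧ |oscCorrection lam μ κ x y| ≤ C := by
  obtain ⟨C₁, hC₁⟩ := exists_abs_le_of_energy_le (f := driftRemainder lam μ κ)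
    (by unfold driftRemainder oscCorrection energy; fun_prop) R
  obtain ⟨C₂, hC₂⟩ := exists_abs_le_of_energy_le (f := oscCorrection lam μ κ)
    (by unfold oscCorrection energy; fun_prop) R
  exact ⟨max C₁ C₂, fun x y h => ⟨(hC₁ x y h).trans (le_max_left _ _),
    (hC₂ x y h).trans (le_max_right _ _)⟩⟩

theorem two_mul_mul_le_of_abs_le {F A A' E Q₁ Q₂ C K lam μ : ℝ} (hA : 0 ≤ A)
    (hA' : |A'| ≤ A ^ 2) (hE : lam ≤ 2 * μ * E) (hQ₁ : |Q₁| ≤ C) (hQ₂ : |Q₂| ≤ C)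
    (hF : |F| ≤ K) :
    2 * F * (-(μ * A * E * F) + A ^ 2 * Q₁ + A' * Q₂) ≤ A * (-(lam * F ^ 2) + 4 * K * C * A) := by
  have hK : 0 ≤ K := (abs_nonneg F).trans hF
  have h₁ : F * Q₁ ≤ K * C := (le_abs_self _).trans <| by
    rw [abs_mul]; exact mul_le_mul hF hQ₁ (abs_nonneg _) hK
  have h₂ : F * A' * Q₂ ≤ K * A ^ 2 * C := (le_abs_self _).trans <| by
    rw [abs_mul, abs_mul]
    exact mul_le_mul (mul_le_mul hF hA' (abs_nonneg _) hK) hQ₂ (abs_nonneg _) (by positivity)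
  have h₃ : lam * F ^ 2 ≤ 2 * μ * E * F ^ 2 := mul_le_mul_of_nonneg_right hE (sq_nonneg F)
  nlinarith [mul_le_mul_of_nonneg_left h₁ (sq_nonneg A), mul_le_mul_of_nonneg_left h₃ hA]

theorem correctedEnergy_estimates {lam μ κ ρ C A A' x y : ℝ} (hμ : 0 < μ) (hρ : ρ ≤ lam / μ / 2)
    (hC : ∀ x y, energy x y ≤ 2 * (lam / μ) →
      |driftRemainder lam μ κ x y| ≤ C ∧ |oscCorrection lam μ κ x y| ≤ C)
    (hA : 0 ≤ A) (hA₁ : A ≤ 1) (hA' : |A'| ≤ A ^ 2) (hxy : |energy x y - lam / μ| ≤ ρ) :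
    |energy x y - lam / μ - correctedEnergy lam μ κ A x y| ≤ C * A ∧
      2 * correctedEnergy lam μ κ A x y * (-(μ * A * energy x y * correctedEnergy lam μ κ A x y)
        + A ^ 2 * driftRemainder lam μ κ x y + A' * oscCorrection lam μ κ x y)
        ≤ A * (-(lam * correctedEnergy lam μ κ A x y ^ 2) + 4 * (ρ + C) * C * A) := by
  obtain ⟨hlo, hhi⟩ := abs_le.1 hxy
  obtain ⟨hQ₁, hQ₂⟩ := hC x y (by linarith)
  have hdiff : |energy x y - lam / μ - correctedEnergy lam μ κ A x y| ≤ C * A := by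
    rw [correctedEnergy, sub_add_cancel_left, abs_neg, abs_mul, abs_of_nonneg hA, mul_comm]
    exact mul_le_mul_of_nonneg_right hQ₂ hA
  refine ⟨hdiff, two_mul_mul_le_of_abs_le hA hA' ?_ hQ₁ hQ₂ ?_⟩
  · have : μ * (lam / μ) = lam := mul_div_cancel₀ lam hμ.ne'
    nlinarith
  · have : C * A ≤ C := mul_le_of_le_one_right ((abs_nonneg _).trans hQ₂) hA₁
    obtain ⟨h₁, h₂⟩ := abs_le.1 hdiff
    exact abs_le.2 ⟨by linarith, by linarith⟩

theorem stable_limit_cycle_of_coefficient {lam μ κ : ℝ} (hlam : 0 < lam) (hμ : 0 < μ)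
    {a a' : ℝ → ℝ} {T : ℝ} (hT : 0 < T) (ha : ∀ t ≥ T, HasDerivAt a (a' t) t)
    (ha' : ∀ t ≥ T, |a' t| ≤ a t ^ 2) (ha_inv : ∀ t ≥ T, t⁻¹ ≤ a t)
    (ha_lim : Tendsto a atTop (𝓝 0)) :
    ∀ ε > 0, ∃ δ > 0, ∃ ts ≥ T, ∀ τ0 ≥ ts, ∀ x y : ℝ → ℝ,
      (∀ t ≥ τ0, HasDerivAt x (y t) t ∧
        HasDerivAt y (-x t + a t * y t * (lam + κ * x t - μ * ((x t) ^ 2 + (y t) ^ 2) / 2)) t) →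
      |energy (x τ0) (y τ0) - lam / μ| ≤ δ →
      (∀ t ≥ τ0, |energy (x t) (y t) - lam / μ| < ε) ∧
        Tendsto (fun t => energy (x t) (y t)) atTop (𝓝 (lam / μ)) := by
  intro ε hε
  set ρ := min ε (lam / μ / 2)
  have hρ : 0 < ρ := lt_min hε (by positivity)
  obtain ⟨C, hC⟩ := exists_abs_remainders_le lam μ κ (2 * (lam / μ))
  have hC₀ : 0 ≤ C := (abs_nonneg _).trans (hC 0 0 (by simp [energy]; positivity)).1
  have hsmall : ∀ b, ∀ c > 0, ∀ᶠ t in atTop, b * a t < c := fun b c hc => by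
    simpa using (ha_lim.const_mul b).eventually_lt_const (by simpa using hc)
  obtain ⟨ts, hts⟩ := eventually_atTop.1 <| (eventually_ge_atTop T).and <|
    (hsmall 1 1 one_pos).and <| (hsmall C (ρ / 8) (by positivity)).and <|
      hsmall (4 * (ρ + C) * C) (lam * (ρ / 4) ^ 2) (by positivity)
  refine ⟨ρ / 8, by positivity, max ts T, le_max_right _ _, fun τ0 hτ0 x y hsol hinit => ?_⟩
  have hts' : ∀ t ≥ τ0, T ≤ t ∧ a t < 1 ∧ C * a t < ρ / 8 ∧
      4 * (ρ + C) * C * a t < lam * (ρ / 4) ^ 2 :=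
    fun t ht => by simpa using hts t ((le_max_left _ _).trans (hτ0.trans ht))
  have hE : ∀ t ≥ τ0, ContinuousAt (fun s => energy (x s) (y s)) t := fun t ht => by
    have := (hsol t ht).1.continuousAt
    have := (hsol t ht).2.continuousAt
    unfold energy
    fun_prop
  have hF := fun t (ht : t ≥ τ0) => (hasDerivAt_correctedEnergy hμ.ne' (hsol t ht).1
    (hsol t ht).2 (ha t (hts' t ht).1)).fun_pow 2
  refine abs_sub_lt_and_tendsto_of_hasDerivAt_sq_le (hT.trans_le (hts' τ0 le_rfl).1) hlam hρ hE
    hF (fun t ht hreg => ?_) (fun t ht => ha_inv t (hts' t ht).1) ha_lim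
    (fun t ht => (hts' t ht).2.2) hinit
    |>.imp_left fun h t ht => (h t ht).trans_le (min_le_left _ _)
  have hA : 0 < a t := (inv_pos.2 (hT.trans_le (hts' t ht).1)).trans_le (ha_inv t (hts' t ht).1)
  obtain ⟨h₁, h₂⟩ := correctedEnergy_estimates hμ (min_le_right _ _) hC hA.le (hts' t ht).2.1.le
    (ha' t (hts' t ht).1) hreg
  exact ⟨h₁, by norm_num; linarith⟩

theorem inv_le_rpow_of_neg_one_le {p t : ℝ} (hp : -1 ≤ p) (ht : 1 ≤ t) : t⁻¹ ≤ t ^ p := by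
  simpa [Real.rpow_neg_one] using Real.rpow_le_rpow_of_exponent_le ht hp

theorem abs_mul_rpow_sub_one_le_sq {p t : ℝ} (hp : -1 ≤ p) (hp₀ : p ≤ 0) (ht : 1 ≤ t) :
    |p * t ^ (p - 1)| ≤ (t ^ p) ^ 2 := by
  have hpow : t ^ (p - 1) ≤ (t ^ p) ^ 2 := by
    rw [← Real.rpow_natCast, ← Real.rpow_mul (by linarith)]
    exact Real.rpow_le_rpow_of_exponent_le ht (by push_cast; linarith)
  rw [abs_mul, abs_of_nonneg (Real.rpow_nonneg (by linarith) _)]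
  exact (mul_le_of_le_one_left (Real.rpow_nonneg (by linarith) _)
    (abs_le.2 ⟨hp, by linarith⟩)).trans hpow

/-- for `1 ≤ n ≤ q`, `λ > 0`, `μ > 0`, the circle
`{(x,y) : (x² + y²)/2 = λ/μ}` is a stable limit cycle: solutions starting at a
late enough time with `(x² + y²)/2` close to `λ/μ` keep it within `ε` of `λ/μ`
for all later times, and `(x(t)² + y(t)²)/2 → λ/μ` as `t → ∞`. -/
theorem stable_limit_cycle_example
    (q n : ℕ) (hq : 0 < q) (hn : 1 ≤ n) (hnq : n ≤ q)
    (lam μ κ : ℝ) (hlam : 0 < lam) (hμ : 0 < μ) :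
    ∀ ε > 0, ∃ δ > 0, ∃ ts ≥ (1:ℝ), ∀ τ0 ≥ ts,
      ∀ x y : ℝ → ℝ, IsCycleSol q n lam μ κ τ0 x y →
        |((x τ0) ^ 2 + (y τ0) ^ 2) / 2 - lam / μ| ≤ δ →
        (∀ t ≥ τ0, |((x t) ^ 2 + (y t) ^ 2) / 2 - lam / μ| < ε) ∧
        Filter.Tendsto (fun t => ((x t) ^ 2 + (y t) ^ 2) / 2)
          Filter.atTop (nhds (lam / μ)) := by
  have hp₀ : 0 < (n : ℝ) / q := div_pos (by exact_mod_cast hn) (by exact_mod_cast hq)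
  have hp₁ : -1 ≤ -(n : ℝ) / q := by
    rw [neg_div, neg_le_neg_iff]
    exact div_le_one_of_le₀ (by exact_mod_cast hnq) (Nat.cast_nonneg q)
  have hp : -(n : ℝ) / q ≤ 0 := by rw [neg_div]; exact neg_nonpos.2 hp₀.le
  have ha_lim : Tendsto (fun t : ℝ => t ^ (-(n : ℝ) / q)) atTop (𝓝 0) := by
    simpa only [neg_div] using tendsto_rpow_neg_atTop hp₀
  exact stable_limit_cycle_of_coefficient hlam hμ one_pos
    (fun t ht => Real.hasDerivAt_rpow_const (Or.inl (one_pos.trans_le ht).ne'))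
    (fun t ht => abs_mul_rpow_sub_one_le_sq hp₁ hp ht)
    (fun t ht => inv_le_rpow_of_neg_one_le hp₁ ht) ha_lim
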